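/- arXiv:2510.09843 — 4 statements merged into one kernel-verified Lean document; each statement's English description precedes it below -/
import Mathlib

section
/- Every C² curve x : ℝ → ℝ³ solving the Lotka–Volterra system ẋⁱ(t) = Xⁱ(x(t)) for all t satisfies the semispray equations d²xᵏ/dt² + 2Gᵏ(x(t), ẋ(t)) = 0 for k = 1, 2, 3. -/
open Matrix

/-- Partial derivative of `f : ℝ³ → ℝ` with respect to the `j`-th coordinate. -/
noncomputable def pd (f : (Fin 3 → ℝ) → ℝ) (j : Fin 3) (x : Fin 3 → ℝ) : ℝ :=
  fderiv ℝ f x (Pi.single j 1)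

/-- The Lotka–Volterra vector field on ℝ³. -/
noncomputable def LV (A : Fin 3 → Fin 3 → ℝ) (B : Fin 3 → ℝ) (x : Fin 3 → ℝ) : Fin 3 → ℝ :=
  fun i => x i * (B i - ∑ j, A i j * x j)

/-- The least squares Lagrangian associated with a vector field `X`. -/
noncomputable def lsqL (X : (Fin 3 → ℝ) → (Fin 3 → ℝ)) (x y : Fin 3 → ℝ) : ℝ :=
  ∑ i, (y i - X x i) ^ 2

/-- The semispray components produced by the least squares Lagrangian of `X`. -/
noncomputable def semispray (X : (Fin 3 → ℝ) → (Fin 3 → ℝ)) (x y : Fin 3 → ℝ) (k : Fin 3) : ℝ :=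
  -(1 / 2) * ((∑ j, (pd (fun u => X u k) j x - pd (fun u => X u j) k x) * y j)
    + ∑ j, pd (fun u => X u j) k x * X x j)

/-- The Jacobian matrix `J(x) = (∂Xⁱ/∂xʲ)(x)` of a vector field `X`. -/
noncomputable def Jmat (X : (Fin 3 → ℝ) → (Fin 3 → ℝ)) (x : Fin 3 → ℝ) :
    Matrix (Fin 3) (Fin 3) ℝ :=
  Matrix.of fun i j => pd (fun u => X u i) j x

/-- The least squares Hamiltonian associated with a vector field `X`. -/
noncomputable def Ham (X : (Fin 3 → ℝ) → (Fin 3 → ℝ)) (x p : Fin 3 → ℝ) : ℝ :=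
  (1 / 4) * (∑ i, (p i) ^ 2) + ∑ k, X x k * p k

/-- The Lagrangian canonical nonlinear connection matrix `N(x) = -(1/2)(J(x) - J(x)ᵗ)`. -/
noncomputable def NL (A : Fin 3 → Fin 3 → ℝ) (B : Fin 3 → ℝ) (x : Fin 3 → ℝ) :
    Matrix (Fin 3) (Fin 3) ℝ :=
  (-(1 / 2) : ℝ) • (Jmat (LV A B) x - (Jmat (LV A B) x)ᵀ)

/-- The Lagrangian d-torsion matrices: entry `(i, j)` of `Rtor A B k x` is
`Rʲₖⁱ(x) = ∂Nʲⁱ/∂xᵏ(x) − ∂Nₖⁱ/∂xʲ(x)`. -/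
noncomputable def Rtor (A : Fin 3 → Fin 3 → ℝ) (B : Fin 3 → ℝ) (k : Fin 3) (x : Fin 3 → ℝ) :
    Matrix (Fin 3) (Fin 3) ℝ :=
  Matrix.of fun i j => pd (fun u => NL A B u i j) k x - pd (fun u => NL A B u i k) j x

/-- The Lagrangian Yang–Mills electromagnetic-like energy
`EYM(x) = (1/2)·Trace(F(x)·F(x)ᵗ)` with `F(x) = -N(x)`. -/
noncomputable def EYM (A : Fin 3 → Fin 3 → ℝ) (B : Fin 3 → ℝ) (x : Fin 3 → ℝ) : ℝ :=
  (1 / 2) * Matrix.trace ((-(NL A B x)) * (-(NL A B x))ᵀ)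

/-!
Along an integral curve of `X` the chain rule gives `ẍᵏ = ∑ⱼ ∂ⱼXᵏ ẋʲ`. Substituting `ẋ = X(x)`
into `2Gᵏ(x, ẋ)`, the two sums involving `∂ₖXʲ` cancel, leaving `-∑ⱼ ∂ⱼXᵏ ẋʲ`.
-/

theorem fderiv_apply_eq_sum_pd (f : (Fin 3 → ℝ) → ℝ) (x v : Fin 3 → ℝ) :
    fderiv ℝ f x v = ∑ j, v j * pd f j x := by
  conv_lhs => rw [pi_eq_sum_univ' v]
  simp only [map_sum, map_smul, smul_eq_mul, pd]

theorem fderiv_apply_apply {ι : Type*} [Fintype ι] {E : Type*} [NormedAddCommGroup E]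
    [NormedSpace ℝ E] {X : E → ι → ℝ} {y : E} (hX : DifferentiableAt ℝ X y) (k : ι) (v : E) :
    fderiv ℝ X y v k = fderiv ℝ (fun u => X u k) y v := by
  rw [(hasFDerivAt_pi'.1 hX.hasFDerivAt k).fderiv]
  rfl

theorem deriv_deriv_of_deriv_eq_comp {E : Type*} [NormedAddCommGroup E] [NormedSpace ℝ E]
    {X : E → E} {x : ℝ → E} {t : ℝ} (hode : deriv x = X ∘ x) (hX : DifferentiableAt ℝ X (x t))
    (hx : DifferentiableAt ℝ x t) :
    deriv (deriv x) t = fderiv ℝ X (x t) (deriv x t) := by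
  conv_lhs => rw [hode]
  exact (hX.hasFDerivAt.comp_hasDerivAt t hx.hasDerivAt).deriv

theorem semispray_apply_self (X : (Fin 3 → ℝ) → Fin 3 → ℝ) (x : Fin 3 → ℝ) (k : Fin 3) :
    semispray X x (X x) k = -(1 / 2) * ∑ j, X x j * pd (fun u => X u k) j x := by
  rw [semispray]
  simp only [sub_mul, Finset.sum_sub_distrib, sub_add_cancel, mul_comm (X x _)]

theorem deriv_deriv_add_two_mul_semispray_eq_zero {X : (Fin 3 → ℝ) → Fin 3 → ℝ}
    {x : ℝ → Fin 3 → ℝ} (hX : Differentiable ℝ X) (hx : Differentiable ℝ x)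
    (hode : deriv x = X ∘ x) (t : ℝ) (k : Fin 3) :
    deriv (deriv x) t k + 2 * semispray X (x t) (deriv x t) k = 0 := by
  rw [deriv_deriv_of_deriv_eq_comp hode (hX _) (hx t), fderiv_apply_apply (hX _),
    fderiv_apply_eq_sum_pd, congrFun hode t, Function.comp_apply, semispray_apply_self]
  ring

theorem differentiable_LV (A : Fin 3 → Fin 3 → ℝ) (B : Fin 3 → ℝ) : Differentiable ℝ (LV A B) := by
  unfold LV
  fun_prop

theorem stmt_1_general (A : Fin 3 → Fin 3 → ℝ) (B : Fin 3 → ℝ)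
    (x : ℝ → Fin 3 → ℝ) (hx : ContDiff ℝ 2 x)
    (hode : ∀ t : ℝ, ∀ i : Fin 3, deriv x t i = LV A B (x t) i) :
    ∀ t : ℝ, ∀ k : Fin 3,
      deriv (deriv x) t k + 2 * semispray (LV A B) (x t) (deriv x t) k = 0 :=
  deriv_deriv_add_two_mul_semispray_eq_zero (differentiable_LV A B)
    (hx.differentiable two_ne_zero) (funext fun t => funext (hode t))

/-- every C² solution of the Lotka–Volterra system satisfies the
semispray equations `d²xᵏ/dt² + 2Gᵏ(x, ẋ) = 0`. -/
theorem stmt_1 (A : Fin 3 → Fin 3 → ℝ) (B : Fin 3 → ℝ)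
    (hA : ∀ i j, 0 < A i j) (hB : ∀ i, 0 < B i)
    (x : ℝ → Fin 3 → ℝ) (hx : ContDiff ℝ 2 x)
    (hode : ∀ t : ℝ, ∀ i : Fin 3, deriv x t i = LV A B (x t) i) :
    ∀ t : ℝ, ∀ k : Fin 3,
      deriv (deriv x) t k + 2 * semispray (LV A B) (x t) (deriv x t) k = 0 :=
  stmt_1_general A B x hx hode
end

section
/- Let X : ℝ³ → ℝ³ be a smooth vector field and let L(x, y) = Σᵢ (yⁱ − Xⁱ(x))² be the associated least squares Lagrangian. A C² curve x : ℝ → ℝ³ satisfies the Euler–Lagrange equations (∂L/∂xᵏ)(x(t), ẋ(t)) − d/dt[(∂L/∂yᵏ)(x(t), ẋ(t))] = 0 for k = 1, 2, 3 if and only if it satisfies the second-order geometric form d²xᵏ/dt² + 2Gᵏ(x(t), ẋ(t)) = 0 for k = 1, 2, 3, where Gᵏ(x, y) = −(1/2)[ Σⱼ (∂Xᵏ/∂xʲ − ∂Xʲ/∂xᵏ)(x) yʲ + Σⱼ (∂Xʲ/∂xᵏ)(x) Xʲ(x) ]. -/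
open Matrix

section aux
lemma clm_apply_eq_sum' (f : (Fin 3 → ℝ) →L[ℝ] ℝ) (v : Fin 3 → ℝ) :
    f v = ∑ j, v j * f (Pi.single j 1) := by
  have h : v = ∑ j, v j • (Pi.single j 1 : Fin 3 → ℝ) := by
    rw [pi_eq_sum_univ v]
    congr 1
    ext j i
    simp [Pi.single_apply, eq_comm]
  calc f v = f (∑ j, v j • (Pi.single j 1 : Fin 3 → ℝ)) := by rw [← h]
    _ = ∑ j, v j * f (Pi.single j 1) := by rw [map_sum]; simp [smul_eq_mul]

lemma pdA' (X : (Fin 3 → ℝ) → (Fin 3 → ℝ)) (hX : ContDiff ℝ (⊤ : ℕ∞) X)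
    (y x : Fin 3 → ℝ) (k : Fin 3) :
    pd (fun u => lsqL X u y) k x
      = ∑ i, -2 * (y i - X x i) * pd (fun u => X u i) k x := by
  have hXi : ∀ i, ContDiff ℝ (⊤ : ℕ∞) (fun u => X u i) := fun i => contDiff_pi.mp hX i
  have hD : ∀ i, HasFDerivAt (fun u => X u i) (fderiv ℝ (fun u => X u i) x) x :=
    fun i => (((hXi i).differentiable (by simp)) x).hasFDerivAt
  have h1 : ∀ i, HasFDerivAt (fun u => y i - X u i)
      (-(fderiv ℝ (fun u => X u i) x)) x := fun i => (hD i).const_sub (y i)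
  have h2 : ∀ i, HasFDerivAt (fun u => (y i - X u i) ^ 2)
      ((y i - X x i) • -(fderiv ℝ (fun u => X u i) x)
        + (y i - X x i) • -(fderiv ℝ (fun u => X u i) x)) x := by
    intro i
    have := (h1 i).mul (h1 i)
    simp only [pow_two]; exact this
  have hsum : HasFDerivAt (fun u => lsqL X u y)
      (∑ i, ((y i - X x i) • -(fderiv ℝ (fun u => X u i) x)
        + (y i - X x i) • -(fderiv ℝ (fun u => X u i) x))) x := by
    unfold lsqL
    exact HasFDerivAt.fun_sum (fun i _ => h2 i)
  rw [pd, hsum.fderiv]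
  simp only [ContinuousLinearMap.sum_apply, ContinuousLinearMap.add_apply,
    ContinuousLinearMap.smul_apply, ContinuousLinearMap.neg_apply, smul_eq_mul]
  apply Finset.sum_congr rfl
  intro i _
  rw [pd]
  ring

lemma pdB' (X : (Fin 3 → ℝ) → (Fin 3 → ℝ)) (x y : Fin 3 → ℝ) (k : Fin 3) :
    pd (fun v => lsqL X x v) k y = 2 * (y k - X x k) := by
  set P : Fin 3 → ((Fin 3 → ℝ) →L[ℝ] ℝ) := fun i => ContinuousLinearMap.proj i with hP
  have h1 : ∀ i : Fin 3, HasFDerivAt (fun v : Fin 3 → ℝ => v i - X x i) (P i) y := by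
    intro i
    have h : HasFDerivAt (fun v : Fin 3 → ℝ => v i) (P i) y := (P i).hasFDerivAt
    exact h.sub_const (X x i)
  have h2 : ∀ i : Fin 3, HasFDerivAt (fun v : Fin 3 → ℝ => (v i - X x i) ^ 2)
      ((y i - X x i) • P i + (y i - X x i) • P i) y := by
    intro i
    have := (h1 i).mul (h1 i)
    simp only [pow_two]; exact this
  have hsum : HasFDerivAt (fun v => lsqL X x v)
      (∑ i, ((y i - X x i) • P i + (y i - X x i) • P i)) y := by
    unfold lsqL
    exact HasFDerivAt.fun_sum (fun i _ => h2 i)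
  rw [pd, hsum.fderiv]
  simp only [ContinuousLinearMap.sum_apply, ContinuousLinearMap.add_apply,
    ContinuousLinearMap.smul_apply, hP, ContinuousLinearMap.proj_apply, smul_eq_mul,
    Pi.single_apply]
  simp only [mul_one, mul_zero, ← Finset.sum_add_distrib, ← two_mul]
  simp [Finset.sum_ite_eq']
end aux


/-- for a smooth vector field `X`, a C² curve satisfies the Euler–Lagrange
equations of the least squares Lagrangian iff it satisfies the second-order geometric
(semispray) form. -/
theorem stmt_2 (X : (Fin 3 → ℝ) → (Fin 3 → ℝ)) (hX : ContDiff ℝ (⊤ : ℕ∞) X)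
    (x : ℝ → Fin 3 → ℝ) (hx : ContDiff ℝ 2 x) :
    (∀ t : ℝ, ∀ k : Fin 3,
        pd (fun u => lsqL X u (deriv x t)) k (x t)
          - deriv (fun s => pd (fun v => lsqL X (x s) v) k (deriv x s)) t = 0) ↔
    (∀ t : ℝ, ∀ k : Fin 3,
        deriv (deriv x) t k + 2 * semispray X (x t) (deriv x t) k = 0) := by
  have hdx : Differentiable ℝ x := hx.differentiable (by norm_num)
  have hx2 : ContDiff ℝ ((1 : WithTop ℕ∞) + 1) x := by
    rw [one_add_one_eq_two]; exact hx
  have hd1 : Differentiable ℝ (deriv x) :=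
    ((contDiff_succ_iff_deriv.mp hx2).2.2).differentiable one_ne_zero
  refine forall_congr' fun t => forall_congr' fun k => ?_
  -- rewrite the time-derivative term
  have hre : (fun s => pd (fun v => lsqL X (x s) v) k (deriv x s))
      = fun s => 2 * (deriv x s k - X (x s) k) :=
    funext fun s => pdB' X (x s) (deriv x s) k
  have hc : HasDerivAt (fun s => deriv x s k) (deriv (deriv x) t k) t := by
    have h := (hd1 t).hasDerivAt
    have hp : HasFDerivAt (fun v : Fin 3 → ℝ => v k)
        (ContinuousLinearMap.proj k : (Fin 3 → ℝ) →L[ℝ] ℝ) (deriv x t) :=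
      (ContinuousLinearMap.proj k : (Fin 3 → ℝ) →L[ℝ] ℝ).hasFDerivAt
    exact hp.comp_hasDerivAt t h
  have hXc : HasDerivAt (fun s => X (x s) k)
      (fderiv ℝ (fun u => X u k) (x t) (deriv x t)) t := by
    have hXk : ContDiff ℝ (⊤ : ℕ∞) (fun u => X u k) := contDiff_pi.mp hX k
    have hDk : HasFDerivAt (fun u => X u k) (fderiv ℝ (fun u => X u k) (x t)) (x t) :=
      ((hXk.differentiable (by simp)) (x t)).hasFDerivAt
    exact hDk.comp_hasDerivAt t (hdx t).hasDerivAt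
  have hderivEq : deriv (fun s => pd (fun v => lsqL X (x s) v) k (deriv x s)) t
      = 2 * (deriv (deriv x) t k - fderiv ℝ (fun u => X u k) (x t) (deriv x t)) := by
    rw [hre]
    exact ((hc.sub hXc).const_mul 2).deriv
  rw [pdA' X hX (deriv x t) (x t) k, hderivEq,
    clm_apply_eq_sum' (fderiv ℝ (fun u => X u k) (x t)) (deriv x t)]
  simp only [semispray, pd]
  rw [Fin.sum_univ_three, Fin.sum_univ_three, Fin.sum_univ_three, Fin.sum_univ_three]
  constructor <;> intro h <;> linarith
end

section
/- Let X : ℝ³ → ℝ³ be a smooth vector field, G the associated semispray with components Gᵏ(x, y) = −(1/2)[ Σⱼ (∂Xᵏ/∂xʲ − ∂Xʲ/∂xᵏ)(x) yʲ + Σⱼ (∂Xʲ/∂xᵏ)(x) Xʲ(x) ], and J(x) = (∂Xⁱ/∂xʲ)(x) the Jacobian matrix of X. Then the canonical nonlinear connection N with components Nimesʲⁱ(x, y) = ∂Gⁱ/∂yʲ(x, y) is independent of y and satisfies, as a matrix identity, N(x) = −(1/2)(J(x) − J(x)ᵗ); in particular N(x) is skew-symmetric. -/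
open Matrix

/-- The canonical nonlinear connection: entry `(i, j)` is `Nʲⁱ(x, y) = ∂Gⁱ/∂yʲ(x, y)`. -/
noncomputable def Nconn (X : (Fin 3 → ℝ) → (Fin 3 → ℝ)) (x y : Fin 3 → ℝ) :
    Matrix (Fin 3) (Fin 3) ℝ :=
  Matrix.of fun i j => pd (fun v => semispray X x v i) j y


lemma pd_lin (c : Fin 3 → ℝ) (d : ℝ) (j : Fin 3) (y : Fin 3 → ℝ) :
    pd (fun v => -(1/2 : ℝ) * ((∑ k, c k * v k) + d)) j y = -(1/2) * c j := by
  have h : HasFDerivAt (fun v : Fin 3 → ℝ => -(1/2 : ℝ) * ((∑ k, c k * v k) + d))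
      (-((1/2 : ℝ) • ∑ k : Fin 3, c k • (ContinuousLinearMap.proj k :
        (Fin 3 → ℝ) →L[ℝ] ℝ))) y := by
    have h1 : HasFDerivAt (fun v : Fin 3 → ℝ => ∑ k, c k * v k)
        (∑ k : Fin 3, c k • (ContinuousLinearMap.proj k : (Fin 3 → ℝ) →L[ℝ] ℝ)) y := by
      apply HasFDerivAt.fun_sum
      intro k _
      exact ((hasFDerivAt_apply k y).const_mul (c k))
    simpa using ((h1.add_const d).const_mul (-(1/2 : ℝ)))
  rw [pd, h.fderiv]
  simp [Pi.single_apply]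

/-- for a smooth vector field `X`, the canonical nonlinear connection
`Nʲⁱ = ∂Gⁱ/∂yʲ` is independent of `y`, satisfies `N(x) = -(1/2)(J(x) - J(x)ᵗ)`, and in
particular is skew-symmetric. -/
theorem stmt_3 (X : (Fin 3 → ℝ) → (Fin 3 → ℝ)) (hX : ContDiff ℝ (⊤ : ℕ∞) X) :
    (∀ x y y' : Fin 3 → ℝ, Nconn X x y = Nconn X x y') ∧
    (∀ x y : Fin 3 → ℝ, Nconn X x y = (-(1 / 2) : ℝ) • (Jmat X x - (Jmat X x)ᵀ)) ∧
    (∀ x y : Fin 3 → ℝ, (Nconn X x y)ᵀ = -(Nconn X x y)) := by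
  have key : ∀ x y : Fin 3 → ℝ, ∀ i j : Fin 3, Nconn X x y i j
      = -(1/2) * (pd (fun u => X u i) j x - pd (fun u => X u j) i x) := by
    intro x y i j
    simp only [Nconn, Matrix.of_apply, semispray]
    exact pd_lin _ _ j y
  refine ⟨?_, ?_, ?_⟩
  · intro x y y'; ext i j; rw [key, key]
  · intro x y; ext i j
    rw [key]
    simp [Jmat, Matrix.smul_apply, Matrix.sub_apply]
  · intro x y; ext i j
    simp only [Matrix.transpose_apply, Matrix.neg_apply, key]
    ring
end

section
/- For the Lotka–Volterra vector field X, the Lagrangian Yang–Mills electromagnetic-like energy EYM(x) = (1/2)·Trace(F(x)·F(x)ᵗ), where F(x) = −N(x), satisfies EYM(x) = (1/4)[ (a₁₂x₁ − a₂₁x₂)² + (a₁₃x₁ − a₃₁x₃)² + (a₂₃x₂ − a₃₂x₃)² ]; consequently, for ρ ≥ 0, a point x ∈ ℝ³ lies on the constant level surface EYM(x) = ρ if and only if (a₁₂x₁ − a₂₁x₂)² + (a₁₃x₁ − a₃₁x₃)² + (a₂₃x₂ − a₃₂x₃)² = 4ρ. -/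
open Matrix

/-! Only the antisymmetric part of the Jacobian enters `N`, so the diagonal growth rates
`bᵢ − ∑ₖ aᵢₖxₖ` cancel and `Nᵢⱼ = (aᵢⱼxᵢ − aⱼᵢxⱼ)/2`. Since `N` is antisymmetric,
`Trace(N Nᵗ)` is twice the sum of the squares of its three entries above the diagonal. -/

theorem Matrix.trace_mul_transpose_self {n R : Type*} [Fintype n] [CommSemiring R]
    (M : Matrix n n R) : trace (M * Mᵀ) = ∑ i, ∑ j, M i j ^ 2 := by
  simp only [trace, diag, mul_apply, transpose_apply, sq]

theorem pd_LV (A : Fin 3 → Fin 3 → ℝ) (B : Fin 3 → ℝ) (i j : Fin 3) (x : Fin 3 → ℝ) :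
    pd (fun u => LV A B u i) j x
      = (if i = j then B i - ∑ k, A i k * x k else 0) - x i * A i j := by
  let π (k : Fin 3) : (Fin 3 → ℝ) →L[ℝ] ℝ := ContinuousLinearMap.proj k
  have hrate : HasFDerivAt (fun u : Fin 3 → ℝ => B i - ∑ k, A i k * u k)
      (-∑ k, A i k • π k) x :=
    ((hasFDerivAt_const (B i) x).fun_sub (HasFDerivAt.fun_sum fun k _ =>
      (π k).hasFDerivAt.const_mul (A i k))).congr_fderiv (zero_sub _)
  have hLV : HasFDerivAt (fun u => LV A B u i)
      (x i • -∑ k, A i k • π k + (B i - ∑ k, A i k * x k) • π i) x :=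
    (π i).hasFDerivAt.fun_mul hrate
  rw [pd, hLV.fderiv]
  by_cases h : i = j
  · subst h; simp [π, Pi.single_apply]; ring
  · simp [π, h, Pi.single_apply]

theorem NL_apply (A : Fin 3 → Fin 3 → ℝ) (B : Fin 3 → ℝ) (x : Fin 3 → ℝ) (i j : Fin 3) :
    NL A B x i j = (x i * A i j - x j * A j i) / 2 := by
  rw [NL, Matrix.smul_apply, Matrix.sub_apply, transpose_apply, Jmat, of_apply, of_apply,
    pd_LV, pd_LV]
  by_cases h : i = j
  · subst h; simp
  · simp [h, Ne.symm h]; ring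

theorem EYM_eq (A : Fin 3 → Fin 3 → ℝ) (B : Fin 3 → ℝ) (x : Fin 3 → ℝ) :
    EYM A B x =
      (1 / 4) * ((A 0 1 * x 0 - A 1 0 * x 1) ^ 2 + (A 0 2 * x 0 - A 2 0 * x 2) ^ 2
        + (A 1 2 * x 1 - A 2 1 * x 2) ^ 2) := by
  rw [EYM, transpose_neg, neg_mul_neg, trace_mul_transpose_self]
  simp only [Fin.sum_univ_three, NL_apply]
  ring

theorem stmt_6_general (A : Fin 3 → Fin 3 → ℝ) (B : Fin 3 → ℝ) :
    (∀ x : Fin 3 → ℝ,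
      EYM A B x =
        (1 / 4) * ((A 0 1 * x 0 - A 1 0 * x 1) ^ 2 + (A 0 2 * x 0 - A 2 0 * x 2) ^ 2
          + (A 1 2 * x 1 - A 2 1 * x 2) ^ 2)) ∧
    (∀ ρ : ℝ, 0 ≤ ρ → ∀ x : Fin 3 → ℝ,
      EYM A B x = ρ ↔
        (A 0 1 * x 0 - A 1 0 * x 1) ^ 2 + (A 0 2 * x 0 - A 2 0 * x 2) ^ 2
          + (A 1 2 * x 1 - A 2 1 * x 2) ^ 2 = 4 * ρ) := by
  refine ⟨EYM_eq A B, fun ρ _ x => ?_⟩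
  rw [EYM_eq]
  constructor <;> intro h <;> linarith

/-- the explicit formula for the Lagrangian Yang–Mills
electromagnetic-like energy, and the description of its constant level surfaces. -/
theorem stmt_6 (A : Fin 3 → Fin 3 → ℝ) (B : Fin 3 → ℝ)
    (hA : ∀ i j, 0 < A i j) (hB : ∀ i, 0 < B i) :
    (∀ x : Fin 3 → ℝ,
      EYM A B x =
        (1 / 4) * ((A 0 1 * x 0 - A 1 0 * x 1) ^ 2 + (A 0 2 * x 0 - A 2 0 * x 2) ^ 2
          + (A 1 2 * x 1 - A 2 1 * x 2) ^ 2)) ∧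
    (∀ ρ : ℝ, 0 ≤ ρ → ∀ x : Fin 3 → ℝ,
      EYM A B x = ρ ↔
        (A 0 1 * x 0 - A 1 0 * x 1) ^ 2 + (A 0 2 * x 0 - A 2 0 * x 2) ^ 2
          + (A 1 2 * x 1 - A 2 1 * x 2) ^ 2 = 4 * ρ) :=
  stmt_6_general A B
end
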